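/- Let Φ be continuous, positive, T-periodic with mean Φ̄, and suppose σ̃ ≥ Φ̄. Then every positive solution of R'(t) = μ R(t)(Φ(t) P₀(R(t)) − σ̃/3) with μ > 0 tends to 0 as t → ∞. Conversely, if every positive solution tends to 0, then σ̃ ≥ Φ̄. -/

import Mathlib

/-!
With `L = log R` the equation reads `L' = μ (Φ P0(R) - σ/3)`. Freezing `P0(R)` at a constant `c`
gives the periodic drift `μ (c Φ - σ/3)`, whose primitive grows like `μ (c Φ̄ - σ/3) t`; the
bounds `0 < P0 < 1/3` turn this into comparison estimates for `L`.

If `σ > Φ̄`, the drift with `c = 1/3` already has negative mean, so `L → -∞`. If `σ = Φ̄`, the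
primitive of the drift with `c = 1/3` is bounded and `L` minus it is antitone; either it tends to
`-∞`, or `L` is bounded, so `R` stays in a compact subset of `(0, ∞)` where `P0 ≤ c < 1/3`, and
the drift with this `c` has negative mean. Conversely, if `σ < Φ̄` and `R → 0`, then
`P0(R) → 1/3`, so eventually `P0(R) ≥ c` with `c Φ̄ > σ/3`, and `L → +∞`. This direction needs a
global positive solution: `log R` solves an equation whose right-hand side is bounded and
Lipschitz, as `u ↦ P0(exp u)` is `1`-Lipschitz.
-/

noncomputable def P0 (x : ℝ) : ℝ := (x * (Real.cosh x / Real.sinh x) - 1) / x ^ 2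

open Set Filter Topology Real MeasureTheory
open scoped NNReal

lemma pos_of_hasDerivAt_pos {f f' : ℝ → ℝ} (hf : ∀ x, HasDerivAt f (f' x) x) (hf0 : f 0 = 0)
    (hf' : ∀ x, 0 < x → 0 < f' x) {x : ℝ} (hx : 0 < x) : 0 < f x := by
  have hmono : StrictMonoOn f (Ici 0) := by
    refine strictMonoOn_of_deriv_pos (convex_Ici 0)
      (fun y _ => (hf y).continuousAt.continuousWithinAt) fun y hy => ?_
    rw [interior_Ici] at hy
    exact (hf y).deriv ▸ hf' y hy
  simpa [hf0] using hmono self_mem_Ici hx.le hx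

lemma sinh_lt_mul_cosh {x : ℝ} (hx : 0 < x) : sinh x < x * cosh x := by
  have hd (y : ℝ) : HasDerivAt (fun x => x * cosh x - sinh x) (y * sinh y) y :=
    (((hasDerivAt_id' y).mul (hasDerivAt_cosh y)).sub (hasDerivAt_sinh y)).congr_deriv (by ring)
  have := pos_of_hasDerivAt_pos hd (by simp) (fun y hy => mul_pos hy (sinh_pos_iff.2 hy)) hx
  linarith

lemma three_mul_sub_lt_sq_mul_sinh {x : ℝ} (hx : 0 < x) :
    3 * (x * cosh x - sinh x) < x ^ 2 * sinh x := by
  have hd (y : ℝ) : HasDerivAt (fun x => x ^ 2 * sinh x - 3 * (x * cosh x - sinh x))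
      (y * (y * cosh y - sinh y)) y :=
    (((hasDerivAt_pow 2 y).mul (hasDerivAt_sinh y)).sub
      ((((hasDerivAt_id' y).mul (hasDerivAt_cosh y)).sub (hasDerivAt_sinh y)).const_mul 3))
      |>.congr_deriv (by push_cast; ring)
  have := pos_of_hasDerivAt_pos hd (by simp)
    (fun y hy => mul_pos hy (by linarith [sinh_lt_mul_cosh hy])) hx
  linarith

lemma cube_lt_three_mul_sub {x : ℝ} (hx : 0 < x) : x ^ 3 < 3 * (x * cosh x - sinh x) := by
  have hd (y : ℝ) : HasDerivAt (fun x => 3 * (x * cosh x - sinh x) - x ^ 3)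
      (3 * y * (sinh y - y)) y :=
    (((((hasDerivAt_id' y).mul (hasDerivAt_cosh y)).sub (hasDerivAt_sinh y)).const_mul 3).sub
      (hasDerivAt_pow 3 y)).congr_deriv (by push_cast; ring)
  have := pos_of_hasDerivAt_pos hd (by simp)
    (fun y hy => by have := self_lt_sinh_iff.2 hy; positivity) hx
  linarith

lemma P0_eq_div {x : ℝ} (hx : 0 < x) : P0 x = (x * cosh x - sinh x) / (x ^ 2 * sinh x) := by
  have := sinh_pos_iff.2 hx
  unfold P0
  field_simp

lemma P0_pos {x : ℝ} (hx : 0 < x) : 0 < P0 x := by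
  have := sinh_pos_iff.2 hx
  rw [P0_eq_div hx]
  exact div_pos (by linarith [sinh_lt_mul_cosh hx]) (by positivity)

lemma P0_lt_one_third {x : ℝ} (hx : 0 < x) : P0 x < 1 / 3 := by
  have := sinh_pos_iff.2 hx
  rw [P0_eq_div hx, div_lt_div_iff₀ (by positivity) (by norm_num)]
  linarith [three_mul_sub_lt_sq_mul_sinh hx]

lemma one_div_three_mul_cosh_lt_P0 {x : ℝ} (hx : 0 < x) : 1 / (3 * cosh x) < P0 x := by
  have := sinh_pos_iff.2 hx
  have hc := cosh_pos x
  rw [P0_eq_div hx, div_lt_div_iff₀ (by positivity) (by positivity)]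
  nlinarith [mul_lt_mul_of_pos_left (cube_lt_three_mul_sub hx) hc,
    mul_lt_mul_of_pos_left (sinh_lt_mul_cosh hx) (pow_pos hx 2)]

lemma tendsto_P0_nhdsGT_zero : Tendsto P0 (𝓝[>] 0) (𝓝 (1 / 3)) := by
  have hlow : Tendsto (fun x => 1 / (3 * cosh x)) (𝓝[>] 0) (𝓝 (1 / 3)) := by
    have : Continuous (fun x => 1 / (3 * cosh x)) :=
      continuous_const.div (continuous_const.mul continuous_cosh) fun _ => by positivity
    simpa using this.continuousWithinAt.tendsto (x := 0) (s := Ioi 0)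
  refine tendsto_of_tendsto_of_tendsto_of_le_of_le' hlow tendsto_const_nhds ?_ ?_ <;>
    filter_upwards [self_mem_nhdsWithin] with x hx
  exacts [(one_div_three_mul_cosh_lt_P0 hx).le, (P0_lt_one_third hx).le]

lemma hasDerivAt_P0 {x : ℝ} (hx : 0 < x) :
    HasDerivAt P0 ((1 / x ^ 2 - 1 / sinh x ^ 2 - P0 x) / x) x := by
  have hs := (sinh_pos_iff.2 hx).ne'
  refine ((((hasDerivAt_id' x).mul ((hasDerivAt_cosh x).div (hasDerivAt_sinh x) hs)).sub
    (hasDerivAt_const x 1)).div (hasDerivAt_pow 2 x) (pow_ne_zero 2 hx.ne')).congr_deriv ?_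
  have hc := cosh_sq_sub_sinh_sq x
  simp only [P0, Pi.mul_apply, Pi.sub_apply, Pi.div_apply]
  field_simp
  linear_combination (-(x ^ 3)) * hc

lemma continuousOn_P0 : ContinuousOn P0 (Ioi 0) := fun _ hx =>
  (hasDerivAt_P0 hx).continuousAt.continuousWithinAt

lemma exists_lt_one_third_forall_P0_le {a b : ℝ} (ha : 0 < a) :
    ∃ c < 1 / 3, ∀ x ∈ Icc a b, P0 x ≤ c := by
  rcases (Icc a b).eq_empty_or_nonempty with hempty | hne
  · exact ⟨0, by norm_num, by simp [hempty]⟩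
  obtain ⟨y, hy, hmax⟩ := isCompact_Icc.exists_isMaxOn hne
    (continuousOn_P0.mono fun x hx => lt_of_lt_of_le ha hx.1)
  exact ⟨P0 y, P0_lt_one_third (lt_of_lt_of_le ha hy.1), hmax⟩

lemma abs_deriv_P0_comp_exp_le_one {x : ℝ} (hx : 0 < x) :
    |1 / x ^ 2 - 1 / sinh x ^ 2 - P0 x| ≤ 1 := by
  have hs := sinh_pos_iff.2 hx
  have hxs := self_lt_sinh_iff.2 hx
  have hinv : 1 / sinh x ^ 2 ≤ 1 / x ^ 2 := by gcongr
  have hsq : 1 / x ^ 2 - 1 / sinh x ^ 2 ≤ 1 := by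
    rw [div_sub_div _ _ (by positivity) (by positivity), div_le_one (by positivity)]
    nlinarith [cosh_sq_sub_sinh_sq x, mul_lt_mul_of_pos_left (sinh_lt_mul_cosh hx) hs,
      mul_lt_mul_of_pos_left (sinh_lt_mul_cosh hx) (mul_pos hx (cosh_pos x))]
  rw [abs_le]
  constructor <;> linarith [P0_pos hx, P0_lt_one_third hx]

lemma lipschitzWith_P0_comp_exp : LipschitzWith 1 (fun u => P0 (exp u)) := by
  have hd (u : ℝ) : HasDerivAt (fun u => P0 (exp u))
      (1 / exp u ^ 2 - 1 / sinh (exp u) ^ 2 - P0 (exp u)) u := by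
    have := (hasDerivAt_P0 (exp_pos u)).comp u (hasDerivAt_exp u)
    exact this.congr_deriv (by field_simp)
  refine lipschitzOnWith_univ.1 <| convex_univ.lipschitzOnWith_of_nnnorm_hasDerivWithin_le
    (fun u _ => (hd u).hasDerivWithinAt) fun u _ => ?_
  rw [← NNReal.coe_le_coe, coe_nnnorm, Real.norm_eq_abs, NNReal.coe_one]
  exact abs_deriv_P0_comp_exp_le_one (exp_pos u)

section GlobalExistence

variable {E : Type*} [NormedAddCommGroup E] [NormedSpace ℝ E] [CompleteSpace E]
  {f : ℝ → E → E} {K L : ℝ≥0}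

theorem exists_forall_mem_Ioo_hasDerivAt_of_lipschitzWith_of_norm_le
    (hlip : ∀ t, LipschitzWith K (f t)) (hcont : ∀ x, Continuous (f · x))
    (hbdd : ∀ t x, ‖f t x‖ ≤ L) (t₀ : ℝ) (x₀ : E) {r : ℝ} (hr : 0 ≤ r) :
    ∃ α : ℝ → E, α t₀ = x₀ ∧ ∀ t ∈ Ioo (t₀ - r) (t₀ + r), HasDerivAt α (f t (α t)) t := by
  have hpl : IsPicardLindelof f (tmin := t₀ - r) (tmax := t₀ + r)
      ⟨t₀, by simp [hr], by simp [hr]⟩ x₀ (L * r.toNNReal) 0 L K :=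
    { lipschitzOnWith := fun t _ => (hlip t).lipschitzOnWith
      continuousOn := fun x _ => (hcont x).continuousOn
      norm_le := fun t _ x _ => hbdd t x
      mul_max_le := by simp [hr] }
  obtain ⟨α, hα₀, hα⟩ := hpl.exists_eq_forall_mem_Icc_hasDerivWithinAt₀
  exact ⟨α, hα₀, fun t ht => (hα t (Ioo_subset_Icc_self ht)).hasDerivAt
    (Icc_mem_nhds ht.1 ht.2)⟩

theorem exists_forall_hasDerivAt_of_lipschitzWith_of_norm_le
    (hlip : ∀ t, LipschitzWith K (f t)) (hcont : ∀ x, Continuous (f · x))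
    (hbdd : ∀ t x, ‖f t x‖ ≤ L) (t₀ : ℝ) (x₀ : E) :
    ∃ γ : ℝ → E, γ t₀ = x₀ ∧ ∀ t, HasDerivAt γ (f t (γ t)) t := by
  choose α hα₀ hα using fun n : ℕ => exists_forall_mem_Ioo_hasDerivAt_of_lipschitzWith_of_norm_le
    hlip hcont hbdd t₀ x₀ (by positivity : (0 : ℝ) ≤ n + 1)
  have hmem {t : ℝ} {n : ℕ} : t ∈ Ioo (t₀ - (n + 1)) (t₀ + (n + 1)) ↔ ⌊|t - t₀|⌋₊ ≤ n := by
    rw [← Real.ball_eq_Ioo, Metric.mem_ball, Real.dist_eq, ← Nat.lt_succ_iff,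
      Nat.floor_lt (abs_nonneg _)]
    push_cast; rfl
  have hagree {n m : ℕ} (hnm : n ≤ m) : EqOn (α m) (α n) (Ioo (t₀ - (n + 1)) (t₀ + (n + 1))) :=
    ODE_solution_unique_of_mem_Ioo (s := fun _ => univ)
      (fun t _ => (hlip t).lipschitzOnWith) (hmem.2 (by simp))
      (fun t ht => ⟨hα m t (hmem.2 ((hmem.1 ht).trans hnm)), trivial⟩)
      (fun t ht => ⟨hα n t ht, trivial⟩) ((hα₀ m).trans (hα₀ n).symm)
  -- near `t`, the glued curve is the `n`-th local solution with `n = ⌊|t - t₀|⌋₊`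
  refine ⟨fun t => α ⌊|t - t₀|⌋₊ t, by simp [hα₀], fun t => ?_⟩
  have hloc : (fun s => α ⌊|s - t₀|⌋₊ s) =ᶠ[𝓝 t] α ⌊|t - t₀|⌋₊ := by
    filter_upwards [isOpen_Ioo.mem_nhds (hmem.2 le_rfl)] with s hs
    exact (hagree (hmem.1 hs) (hmem.2 le_rfl)).symm
  exact (hα _ t (hmem.2 le_rfl)).congr_of_eventuallyEq hloc

end GlobalExistence

lemma Function.Periodic.tendsto_intervalIntegral_atTop_atBot_of_neg {g : ℝ → ℝ} {T : ℝ}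
    (hg : Function.Periodic g T) (hT : 0 < T) (h₀ : ∫ x in 0..T, g x < 0) :
    Tendsto (fun t => ∫ x in 0..t, g x) atTop atBot := by
  have hneg : Function.Periodic (fun x => -g x) T := fun x => by simp only [hg x]
  have := hneg.tendsto_atTop_intervalIntegral_of_pos
    (by simpa only [intervalIntegral.integral_neg, neg_pos] using h₀) hT
  simpa only [intervalIntegral.integral_neg, tendsto_neg_atTop_iff] using this

lemma AntitoneOn.tendsto_atBot_of_not_bddBelow {f : ℝ → ℝ} {a : ℝ} (hf : AntitoneOn f (Ici a))
    (hbdd : ¬BddBelow (f '' Ici a)) : Tendsto f atTop atBot := by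
  rw [tendsto_atBot]
  intro b
  obtain ⟨_, ⟨t, ht, rfl⟩, hft⟩ := not_bddBelow_iff.1 hbdd b
  filter_upwards [eventually_ge_atTop t] with s hs
  exact (hf ht (mem_Ici.2 (le_trans ht hs)) hs).trans hft.le

lemma Function.Periodic.exists_forall_intervalIntegral_mem_Icc {g : ℝ → ℝ} {T : ℝ}
    (hg : Function.Periodic g T) (hT : 0 < T) (h_int : IntervalIntegrable g volume 0 T)
    (h₀ : ∫ x in 0..T, g x = 0) : ∃ a b, ∀ t, ∫ x in 0..t, g x ∈ Icc a b :=
  ⟨_, _, fun t => ⟨by simpa [h₀] using hg.sInf_add_zsmul_le_integral_of_pos h_int hT t,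
    by simpa [h₀] using hg.integral_le_sSup_add_zsmul_of_pos h_int hT t⟩⟩

structure IsPositiveSolution (μ σ : ℝ) (Φ R : ℝ → ℝ) : Prop where
  pos : ∀ t, 0 ≤ t → 0 < R t
  hasDerivAt : ∀ t, 0 ≤ t → HasDerivAt R (μ * R t * (Φ t * P0 (R t) - σ / 3)) t

theorem exists_isPositiveSolution {Φ : ℝ → ℝ} {M : ℝ} (hΦc : Continuous Φ)
    (hΦM : ∀ t, |Φ t| ≤ M) (μ σ : ℝ) : ∃ R, IsPositiveSolution μ σ Φ R := by
  set f : ℝ → ℝ → ℝ := fun t u => μ * (Φ t * P0 (exp u) - σ / 3)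
  have hM : 0 ≤ M := (abs_nonneg _).trans (hΦM 0)
  have hlip (t : ℝ) : LipschitzWith (|μ| * M).toNNReal (f t) := by
    refine LipschitzWith.of_dist_le_mul fun u v => ?_
    rw [Real.coe_toNNReal _ (by positivity), Real.dist_eq, Real.dist_eq]
    have hP0 := lipschitzWith_P0_comp_exp.dist_le_mul u v
    rw [Real.dist_eq, Real.dist_eq, NNReal.coe_one, one_mul] at hP0
    calc |f t u - f t v| = |μ| * (|Φ t| * |P0 (exp u) - P0 (exp v)|) := by
          simp only [f, ← abs_mul]; ring_nf
      _ ≤ |μ| * (M * |u - v|) := by gcongr; exact hΦM t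
      _ = |μ| * M * |u - v| := by ring
  have hbdd (t u : ℝ) : ‖f t u‖ ≤ (|μ| * (M / 3 + |σ| / 3)).toNNReal := by
    rw [Real.coe_toNNReal _ (by positivity), Real.norm_eq_abs]
    have h0 := P0_pos (exp_pos u)
    have h13 := P0_lt_one_third (exp_pos u)
    calc |f t u| = |μ| * |Φ t * P0 (exp u) - σ / 3| := abs_mul _ _
      _ ≤ |μ| * (M / 3 + |σ| / 3) := by
          gcongr
          refine (abs_sub _ _).trans (add_le_add ?_ ?_)
          · rw [abs_mul, abs_of_pos h0]
            nlinarith [hΦM t, abs_nonneg (Φ t)]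
          · rw [abs_div, abs_of_pos (by norm_num : (0 : ℝ) < 3)]
  obtain ⟨γ, -, hγ⟩ := exists_forall_hasDerivAt_of_lipschitzWith_of_norm_le hlip
    (fun u => by fun_prop) hbdd 0 0
  exact ⟨fun t => exp (γ t), fun t _ => exp_pos _,
    fun t _ => ((hγ t).exp).congr_deriv (by simp only [f]; ring)⟩

namespace IsPositiveSolution

variable {μ σ : ℝ} {Φ R : ℝ → ℝ}

lemma hasDerivAt_log (hR : IsPositiveSolution μ σ Φ R) {t : ℝ} (ht : 0 ≤ t) :
    HasDerivAt (fun t => log (R t)) (μ * (Φ t * P0 (R t) - σ / 3)) t :=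
  ((hR.hasDerivAt t ht).log (hR.pos t ht).ne').congr_deriv (by field_simp [(hR.pos t ht).ne'])

lemma log_sub_log_le_integral (hR : IsPositiveSolution μ σ Φ R) (hΦc : Continuous Φ)
    (hΦ : ∀ t, 0 ≤ Φ t) (hμ : 0 ≤ μ) {c s t : ℝ} (hs : 0 ≤ s) (hst : s ≤ t)
    (hc : ∀ τ ∈ Ioo s t, P0 (R τ) ≤ c) :
    log (R t) - log (R s) ≤ ∫ τ in s..t, μ * (c * Φ τ - σ / 3) :=
  intervalIntegral.sub_le_integral_of_hasDeriv_right_of_le hst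
    (fun τ hτ => (hR.hasDerivAt_log (hs.trans hτ.1)).continuousAt.continuousWithinAt)
    (fun τ hτ => (hR.hasDerivAt_log (hs.trans hτ.1.le)).hasDerivWithinAt)
    (by fun_prop : Continuous fun τ => μ * (c * Φ τ - σ / 3)).integrableOn_Icc
    fun τ hτ => mul_le_mul_of_nonneg_left (by nlinarith [hc τ hτ, hΦ τ]) hμ

lemma integral_le_log_sub_log (hR : IsPositiveSolution μ σ Φ R) (hΦc : Continuous Φ)
    (hΦ : ∀ t, 0 ≤ Φ t) (hμ : 0 ≤ μ) {c s t : ℝ} (hs : 0 ≤ s) (hst : s ≤ t)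
    (hc : ∀ τ ∈ Ioo s t, c ≤ P0 (R τ)) :
    ∫ τ in s..t, μ * (c * Φ τ - σ / 3) ≤ log (R t) - log (R s) :=
  intervalIntegral.integral_le_sub_of_hasDeriv_right_of_le hst
    (fun τ hτ => (hR.hasDerivAt_log (hs.trans hτ.1)).continuousAt.continuousWithinAt)
    (fun τ hτ => (hR.hasDerivAt_log (hs.trans hτ.1.le)).hasDerivWithinAt)
    (by fun_prop : Continuous fun τ => μ * (c * Φ τ - σ / 3)).integrableOn_Icc
    fun τ hτ => mul_le_mul_of_nonneg_left (by nlinarith [hc τ hτ, hΦ τ]) hμ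

end IsPositiveSolution

section Drift

variable {T : ℝ} {Φ : ℝ → ℝ}

-- `μ * (c * Φ τ - σ / 3)` is the rate of change of `log R` when `P0 (R τ)` is frozen at `c`.
lemma integral_drift_eq (hT : T ≠ 0) (hΦc : Continuous Φ) (μ c σ : ℝ) :
    ∫ τ in 0..T, μ * (c * Φ τ - σ / 3) =
      μ * T * (c * ((1 / T) * ∫ τ in 0..T, Φ τ) - σ / 3) := by
  rw [intervalIntegral.integral_const_mul, intervalIntegral.integral_sub
    ((hΦc.const_mul c).intervalIntegrable _ _) intervalIntegrable_const,
    intervalIntegral.integral_const_mul, intervalIntegral.integral_const, sub_zero, smul_eq_mul]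
  field_simp

lemma periodic_drift (hΦper : Function.Periodic Φ T) (μ c σ : ℝ) :
    Function.Periodic (fun τ => μ * (c * Φ τ - σ / 3)) T := fun τ => by
  simp only [hΦper τ]

lemma tendsto_integral_drift_atTop (hT : 0 < T) (hΦc : Continuous Φ)
    (hΦper : Function.Periodic Φ T) {μ c σ : ℝ} (hμ : 0 < μ)
    (hcσ : σ / 3 < c * ((1 / T) * ∫ τ in 0..T, Φ τ)) :
    Tendsto (fun t => ∫ τ in 0..t, μ * (c * Φ τ - σ / 3)) atTop atTop :=
  (periodic_drift hΦper μ c σ).tendsto_atTop_intervalIntegral_of_pos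
    (by rw [integral_drift_eq hT.ne' hΦc]; exact mul_pos (mul_pos hμ hT) (by linarith)) hT

lemma tendsto_integral_drift_atBot (hT : 0 < T) (hΦc : Continuous Φ)
    (hΦper : Function.Periodic Φ T) {μ c σ : ℝ} (hμ : 0 < μ)
    (hcσ : c * ((1 / T) * ∫ τ in 0..T, Φ τ) < σ / 3) :
    Tendsto (fun t => ∫ τ in 0..t, μ * (c * Φ τ - σ / 3)) atTop atBot :=
  (periodic_drift hΦper μ c σ).tendsto_intervalIntegral_atTop_atBot_of_neg hT
    (by rw [integral_drift_eq hT.ne' hΦc]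
        exact mul_neg_of_pos_of_neg (mul_pos hμ hT) (by linarith))

end Drift

namespace IsPositiveSolution

variable {T μ σ : ℝ} {Φ R : ℝ → ℝ}

lemma tendsto_log_atBot_of_P0_le (hR : IsPositiveSolution μ σ Φ R) (hT : 0 < T)
    (hΦc : Continuous Φ) (hΦper : Function.Periodic Φ T) (hΦ : ∀ t, 0 ≤ Φ t) (hμ : 0 < μ)
    {c : ℝ} (hc : ∀ t, 0 ≤ t → P0 (R t) ≤ c)
    (hcσ : c * ((1 / T) * ∫ τ in 0..T, Φ τ) < σ / 3) :
    Tendsto (fun t => log (R t)) atTop atBot := by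
  refine tendsto_atBot_mono' atTop ?_
    ((tendsto_integral_drift_atBot hT hΦc hΦper hμ hcσ).atBot_add
      (tendsto_const_nhds (x := log (R 0))))
  filter_upwards [eventually_ge_atTop 0] with t ht
  linarith [hR.log_sub_log_le_integral hΦc hΦ hμ.le le_rfl ht fun τ hτ => hc τ hτ.1.le]

lemma tendsto_log_atTop_of_le_P0 (hR : IsPositiveSolution μ σ Φ R) (hT : 0 < T)
    (hΦc : Continuous Φ) (hΦper : Function.Periodic Φ T) (hΦ : ∀ t, 0 ≤ Φ t) (hμ : 0 < μ)
    {c t₁ : ℝ} (ht₁ : 0 ≤ t₁) (hc : ∀ t, t₁ ≤ t → c ≤ P0 (R t))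
    (hcσ : σ / 3 < c * ((1 / T) * ∫ τ in 0..T, Φ τ)) :
    Tendsto (fun t => log (R t)) atTop atTop := by
  refine tendsto_atTop_mono' atTop ?_
    ((tendsto_integral_drift_atTop hT hΦc hΦper hμ hcσ).atTop_add
      (tendsto_const_nhds (x := log (R t₁) - ∫ τ in 0..t₁, μ * (c * Φ τ - σ / 3))))
  filter_upwards [eventually_ge_atTop t₁] with t ht
  have hint (a b : ℝ) : IntervalIntegrable (fun τ => μ * (c * Φ τ - σ / 3)) volume a b :=
    (by fun_prop : Continuous fun τ => μ * (c * Φ τ - σ / 3)).intervalIntegrable a b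
  have := hR.integral_le_log_sub_log hΦc hΦ hμ.le ht₁ ht fun τ hτ => hc τ hτ.1.le
  rw [← intervalIntegral.integral_interval_sub_left (hint 0 t) (hint 0 t₁)] at this
  linarith

lemma tendsto_log_atBot_of_mean_eq (hR : IsPositiveSolution μ σ Φ R) (hT : 0 < T)
    (hΦc : Continuous Φ) (hΦper : Function.Periodic Φ T) (hΦ : ∀ t, 0 ≤ Φ t) (hμ : 0 < μ)
    (hσ : 0 < σ) (hmean : (1 / T) * ∫ τ in 0..T, Φ τ = σ) :
    Tendsto (fun t => log (R t)) atTop atBot := by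
  set H : ℝ → ℝ := fun t => ∫ τ in 0..t, μ * (1 / 3 * Φ τ - σ / 3)
  have hint (a b : ℝ) : IntervalIntegrable (fun τ => μ * (1 / 3 * Φ τ - σ / 3)) volume a b :=
    (by fun_prop : Continuous fun τ => μ * (1 / 3 * Φ τ - σ / 3)).intervalIntegrable a b
  obtain ⟨lo, hi, hHbdd⟩ :=
    (periodic_drift hΦper μ (1 / 3) σ).exists_forall_intervalIntegral_mem_Icc hT (hint 0 T)
      (by rw [integral_drift_eq hT.ne' hΦc, hmean]; ring)
  have hanti : AntitoneOn (fun t => log (R t) - H t) (Ici 0) := by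
    intro s hs t _ hst
    have := hR.log_sub_log_le_integral hΦc hΦ hμ.le hs hst
      fun τ hτ => (P0_lt_one_third (hR.pos τ (hs.trans hτ.1.le))).le
    rw [← intervalIntegral.integral_interval_sub_left (hint 0 t) (hint 0 s)] at this
    linarith
  by_cases hbdd : BddBelow ((fun t => log (R t) - H t) '' Ici 0)
  · obtain ⟨v, hv⟩ := hbdd
    have hH0 : H 0 = 0 := intervalIntegral.integral_same
    obtain ⟨c, hc3, hc⟩ := exists_lt_one_third_forall_P0_le (a := exp (v + lo))
      (b := exp (log (R 0) + hi)) (exp_pos _)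
    refine hR.tendsto_log_atBot_of_P0_le hT hΦc hΦper hΦ hμ (c := c) (fun t ht => hc _ ?_)
      (by rw [hmean]; nlinarith)
    rw [← exp_log (hR.pos t ht)]
    exact ⟨exp_le_exp.2 (by linarith [hv ⟨t, ht, rfl⟩, (hHbdd t).1]),
      exp_le_exp.2 (by linarith [hanti self_mem_Ici ht ht, (hHbdd t).2])⟩
  · refine tendsto_atBot_mono' atTop (Eventually.of_forall fun t => ?_)
      ((hanti.tendsto_atBot_of_not_bddBelow hbdd).atBot_add (tendsto_const_nhds (x := hi)))
    linarith [(hHbdd t).2]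

lemma tendsto_zero_of_mean_le (hR : IsPositiveSolution μ σ Φ R) (hT : 0 < T)
    (hΦc : Continuous Φ) (hΦper : Function.Periodic Φ T) (hΦ : ∀ t, 0 ≤ Φ t) (hμ : 0 < μ)
    (hσ : 0 < σ) (hmean : (1 / T) * ∫ τ in 0..T, Φ τ ≤ σ) :
    Tendsto R atTop (𝓝 0) := by
  have hlog : Tendsto (fun t => log (R t)) atTop atBot := by
    rcases hmean.lt_or_eq with hlt | heq
    · exact hR.tendsto_log_atBot_of_P0_le hT hΦc hΦper hΦ hμ
        (fun t ht => (P0_lt_one_third (hR.pos t ht)).le) (by linarith)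
    · exact hR.tendsto_log_atBot_of_mean_eq hT hΦc hΦper hΦ hμ hσ heq
  refine (tendsto_exp_atBot.comp hlog).congr' ?_
  filter_upwards [eventually_ge_atTop 0] with t ht
  exact exp_log (hR.pos t ht)

lemma not_tendsto_zero_of_lt_mean (hR : IsPositiveSolution μ σ Φ R) (hT : 0 < T)
    (hΦc : Continuous Φ) (hΦper : Function.Periodic Φ T) (hΦ : ∀ t, 0 ≤ Φ t) (hμ : 0 < μ)
    (hσ : 0 < σ) (hmean : σ < (1 / T) * ∫ τ in 0..T, Φ τ) :
    ¬Tendsto R atTop (𝓝 0) := by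
  intro h0
  have hR0 : Tendsto R atTop (𝓝[>] 0) := tendsto_nhdsWithin_iff.2
    ⟨h0, by filter_upwards [eventually_ge_atTop 0] with t ht using hR.pos t ht⟩
  set m := (1 / T) * ∫ τ in 0..T, Φ τ
  obtain ⟨c, hσc, hc3⟩ := exists_between (show σ / (3 * m) < 1 / 3 by
    rw [div_lt_div_iff₀ (by linarith) three_pos]; nlinarith)
  obtain ⟨t₁, ht₁⟩ := eventually_atTop.1
    ((tendsto_P0_nhdsGT_zero.comp hR0).eventually (lt_mem_nhds hc3))
  have htop := hR.tendsto_log_atTop_of_le_P0 hT hΦc hΦper hΦ hμ (le_max_left 0 t₁)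
    (c := c) (fun t ht => (ht₁ t ((le_max_right 0 t₁).trans ht)).le)
    (by rw [div_lt_iff₀ (by linarith)] at hσc; linarith)
  exact htop.not_tendsto disjoint_atTop_atBot (tendsto_log_nhdsGT_zero.comp hR0)

end IsPositiveSolution

theorem zero_solution_globally_stable_iff
    (T : ℝ) (hT : 0 < T) (Φ : ℝ → ℝ) (hΦc : Continuous Φ)
    (hΦpos : ∀ t, 0 < Φ t) (hΦper : ∀ t, Φ (t + T) = Φ t)
    (μ σ : ℝ) (hμ : 0 < μ) (hσ : 0 < σ) :
    (σ ≥ (1 / T) * ∫ t in (0 : ℝ)..T, Φ t →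
      ∀ R : ℝ → ℝ, (∀ t, 0 ≤ t → 0 < R t) →
        (∀ t, 0 ≤ t → HasDerivAt R (μ * R t * (Φ t * P0 (R t) - σ / 3)) t) →
        Filter.Tendsto R Filter.atTop (nhds 0)) ∧
    ((∀ R : ℝ → ℝ, (∀ t, 0 ≤ t → 0 < R t) →
        (∀ t, 0 ≤ t → HasDerivAt R (μ * R t * (Φ t * P0 (R t) - σ / 3)) t) →
        Filter.Tendsto R Filter.atTop (nhds 0)) →
      σ ≥ (1 / T) * ∫ t in (0 : ℝ)..T, Φ t) := by
  have hΦ (t : ℝ) : 0 ≤ Φ t := (hΦpos t).le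
  refine ⟨fun hmean R hpos hderiv => IsPositiveSolution.tendsto_zero_of_mean_le ⟨hpos, hderiv⟩
    hT hΦc hΦper hΦ hμ hσ hmean, fun hstable => ?_⟩
  obtain ⟨M, hM⟩ := isBounded_iff_forall_norm_le.1
    (Function.Periodic.isBounded_of_continuous hΦper hT.ne' hΦc)
  obtain ⟨R, hR⟩ := exists_isPositiveSolution hΦc (fun t => hM _ (mem_range_self t)) μ σ
  by_contra hlt
  exact hR.not_tendsto_zero_of_lt_mean hT hΦc hΦper hΦ hμ hσ (lt_of_not_ge hlt)
    (hstable R hR.pos hR.hasDerivAt)
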